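/- Let $G$ be a connected multigraph in which every vertex has even degree, obtained as follows: start with the double of a tree $T$ on $V$, and for each path $P_j = (v_1, \dots, v_\ell)$ in a family of pairwise vertex-disjoint subpaths of $T$, remove one copy of each edge of $P_j$ and add the edge $\{v_1, v_\ell\}$. Then $G$ is connected and every vertex of $G$ has even degree, hence $G$ is Eulerian. -/

import Mathlib

open Finset

variable {V : Type*} [Fintype V] [DecidableEq V]

/-- symmetrized edge cost of a (possibly asymmetric) weight function -/
noncomputable def ecost (d : V → V → ℝ) : Sym2 V → ℝ :=
  Sym2.lift ⟨fun x y => (d x y + d y x) / 2, fun x y => by ring⟩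

/-- total cost of an edge set -/
noncomputable def cost (d : V → V → ℝ) (F : Finset (Sym2 V)) : ℝ :=
  ∑ e ∈ F, ecost d e

/-- edges of a cyclic tour given by a vertex list -/
def cycleEdges (l : List V) : Finset (Sym2 V) :=
  ((l.zip (l.rotate 1)).map fun p => s(p.1, p.2)).toFinset

/-- edges of a path given by a vertex list -/
def pathEdges (l : List V) : Finset (Sym2 V) :=
  (l.zipWith (fun a b => s(a, b)) l.tail).toFinset

def IsHamCycle (l : List V) : Prop := l.Nodup ∧ ∀ v : V, v ∈ l

def IsHamPath (l : List V) : Prop := l.Nodup ∧ ∀ v : V, v ∈ l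

def IsMetric (d : V → V → ℝ) : Prop :=
  (∀ x y, 0 ≤ d x y) ∧ (∀ x, d x x = 0) ∧ (∀ x y, d x y = d y x) ∧
    ∀ x y z, d x z ≤ d x y + d y z

def IsSpanningTree (E : Finset (Sym2 V)) : Prop :=
  (SimpleGraph.fromEdgeSet (E : Set (Sym2 V))).IsTree

/-- edge multiset of a walk given by its vertex list -/
def walkEdges (l : List V) : Multiset (Sym2 V) :=
  (l.zipWith (fun a b => s(a, b)) l.tail : List (Sym2 V))

/-- cost of a walk, edges counted with multiplicity -/
noncomputable def walkCost (d : V → V → ℝ) (l : List V) : ℝ :=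
  ((walkEdges l).map (ecost d)).sum

def IsClosedWalk (l : List V) : Prop := l ≠ [] ∧ l.head? = l.getLast?

/-- vertices touched by an edge set -/
def edgeVerts (F : Finset (Sym2 V)) : Finset V :=
  Finset.univ.filter fun v => ∃ e ∈ F, v ∈ e

set_option linter.unusedSectionVars false

-- basic walkEdges lemmas
lemma walkEdges_nil : walkEdges ([] : List V) = 0 := rfl
lemma walkEdges_single (a : V) : walkEdges [a] = 0 := rfl
lemma walkEdges_cons_cons (a b : V) (t : List V) :
    walkEdges (a :: b :: t) = s(a, b) ::ₘ walkEdges (b :: t) := rfl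

lemma walkEdges_cons_head {l : List V} {b : V} (h : l.head? = some b) (a : V) :
    walkEdges (a :: l) = s(a, b) ::ₘ walkEdges l := by
  cases l with
  | nil => simp at h
  | cons c t => simp at h; subst h; rfl

lemma mem_of_mem_walkEdges {l : List V} {e : Sym2 V} (he : e ∈ walkEdges l)
    {x : V} (hx : x ∈ e) : x ∈ l := by
  induction l with
  | nil => simp [walkEdges] at he
  | cons a t ih =>
    cases t with
    | nil => simp [walkEdges] at he
    | cons b t' =>
      rw [walkEdges_cons_cons, Multiset.mem_cons] at he
      rcases he with rfl | he
      · rcases Sym2.mem_iff.mp hx with rfl | rfl <;> simp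
      · simpa using Or.inr (ih he)

lemma walkEdges_eq_zero_iff {l : List V} : walkEdges l = 0 ↔ l.length ≤ 1 := by
  cases l with
  | nil => simp [walkEdges_nil]
  | cons a t =>
    cases t with
    | nil => simp [walkEdges_single]
    | cons b t' => simp [walkEdges_cons_cons]

-- glue lemma
lemma walkEdges_glue : ∀ (X Y : List V) (w : V), X.getLast? = some w → Y.head? = some w →
    walkEdges (X ++ Y.tail) = walkEdges X + walkEdges Y := by
  intro X
  induction X with
  | nil => intro Y w h; simp at h
  | cons a X' ih =>
    intro Y w h hY
    cases X' with
    | nil =>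
      simp at h; subst h
      cases Y with
      | nil => simp at hY
      | cons y Y' =>
        simp at hY; subst hY
        simp [walkEdges_single]
    | cons b X'' =>
      rw [List.getLast?_cons_cons] at h
      have h1 : ((b :: X'') ++ Y.tail).head? = some b := rfl
      rw [List.cons_append, walkEdges_cons_head h1 a, walkEdges_cons_cons,
        ih Y w h hY, Multiset.cons_add]

lemma head?_append_of_head? {C : List V} {w : V} (h : C.head? = some w) (B : List V) :
    (C ++ B).head? = some w := by
  cases C with
  | nil => simp at h
  | cons c C' => simpa using h

lemma getLast?_append_of_getLast? {C : List V} {w : V} (h : C.getLast? = some w) (A : List V) :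
    (A ++ C).getLast? = some w := by
  cases C with
  | nil => simp at h
  | cons c C' => rw [List.getLast?_append] <;> simp [h]

-- splice lemma
lemma walkEdges_splice : ∀ (A : List V) (B C : List V) (w : V),
    C.head? = some w → C.getLast? = some w →
    walkEdges (A ++ C ++ B) = walkEdges C + walkEdges (A ++ w :: B) := by
  intro A
  induction A with
  | nil =>
    intro B C w hh hl
    have : C ++ B = C ++ (w :: B).tail := rfl
    simp only [List.nil_append]
    rw [this, walkEdges_glue C (w :: B) w hl rfl, add_comm]
  | cons a A' ih =>
    intro B C w hh hl
    have h1 : (A' ++ C ++ B).head? = (A' ++ w :: B).head? := by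
      cases A' with
      | nil => simp [head?_append_of_head? hh]
      | cons x A'' => rfl
    cases hh2 : (A' ++ w :: B).head? with
    | none => simp at hh2
    | some y =>
      have e1 : (a :: A') ++ C ++ B = a :: (A' ++ C ++ B) := by simp
      have e2 : (a :: A') ++ w :: B = a :: (A' ++ w :: B) := by simp
      rw [e1, e2, walkEdges_cons_head (h1.trans hh2) a,
        walkEdges_cons_head hh2 a,
        ih B C w hh hl, Multiset.add_cons]

-- degree (loops counted twice)
def deg2 (M : Multiset (Sym2 V)) (x : V) : ℕ :=
  M.countP (x ∈ ·) + M.count s(x, x)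

lemma deg2_add (M N : Multiset (Sym2 V)) (x : V) :
    deg2 (M + N) x = deg2 M x + deg2 N x := by
  simp [deg2, Multiset.countP_add]; ring

lemma deg2_cons (e : Sym2 V) (M : Multiset (Sym2 V)) (x : V) :
    deg2 (e ::ₘ M) x = deg2 {e} x + deg2 M x := by
  rw [← Multiset.singleton_add, deg2_add]

lemma deg2_zero (x : V) : deg2 (0 : Multiset (Sym2 V)) x = 0 := rfl

lemma deg2_pair (a b x : V) :
    deg2 ({s(a, b)} : Multiset (Sym2 V)) x
      = (if a = x then 1 else 0) + (if b = x then 1 else 0) := by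
  rw [deg2, Multiset.countP_eq_card_filter, Multiset.filter_singleton,
    Multiset.count_singleton]
  by_cases ha : a = x <;> by_cases hb : b = x <;>
    simp_all [Sym2.eq_iff, Sym2.mem_iff, eq_comm]

lemma deg2_sum {ι : Type*} (s : Finset ι) (f : ι → Multiset (Sym2 V)) (x : V) :
    deg2 (∑ j ∈ s, f j) x = ∑ j ∈ s, deg2 (f j) x := by
  classical
  induction s using Finset.induction with
  | empty => simp [deg2_zero]
  | @insert a s h ih => simp [Finset.sum_insert h, deg2_add, ih]

-- parity of degrees along a walk
lemma deg2_walk_parity : ∀ (l : List V) (u z x : V), l.head? = some u → l.getLast? = some z →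
    Even (deg2 (walkEdges l) x + (if u = x then 1 else 0) + (if z = x then 1 else 0)) := by
  intro l
  induction l with
  | nil => intro u z x h; simp at h
  | cons a t ih =>
    intro u z x hh hl
    simp at hh; subst hh
    cases t with
    | nil =>
      simp at hl; subst hl
      simp only [walkEdges_single, deg2_zero, zero_add]
      rcases eq_or_ne a x with rfl | h
      · simp [Nat.even_iff]
      · simp [h]
    | cons b t' =>
      rw [List.getLast?_cons_cons] at hl
      have H := ih b z x rfl hl
      rw [walkEdges_cons_cons, deg2_cons, deg2_pair]
      by_cases h1 : a = x <;> by_cases h2 : b = x <;>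
        simp only [Nat.even_iff, h1, h2, if_true, if_false, ite_true, ite_false,
          if_neg, not_false_iff, reduceIte] at H ⊢ <;>
        omega

lemma deg2_eq_zero_of_no_mem {R : Multiset (Sym2 V)} {z : V}
    (h : ∀ e ∈ R, z ∉ e) : deg2 R z = 0 := by
  rw [deg2, Multiset.countP_eq_card_filter]
  have h1 : R.filter (z ∈ ·) = 0 := by
    rw [Multiset.filter_eq_nil]; exact h
  have h2 : s(z, z) ∉ R := fun hc => h _ hc (by simp)
  simp [h1, Multiset.count_eq_zero_of_notMem h2]

/-- greedy trail: walk from `u` until stuck -/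
lemma trail_exhaust : ∀ (n : ℕ) (R : Multiset (Sym2 V)), Multiset.card R ≤ n → ∀ u : V,
    ∃ (l : List V) (rest : Multiset (Sym2 V)) (z : V),
      l.head? = some u ∧ l.getLast? = some z ∧ walkEdges l + rest = R ∧
      ∀ e ∈ rest, z ∉ e := by
  intro n
  induction n with
  | zero =>
    intro R hR u
    have : R = 0 := by
      rw [← Multiset.card_eq_zero]; omega
    exact ⟨[u], 0, u, rfl, rfl, by simp [walkEdges_single, this], by simp⟩
  | succ m ih =>
    intro R hR u
    by_cases h : ∃ e ∈ R, u ∈ e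
    · obtain ⟨e, he, hue⟩ := h
      obtain ⟨y, rfl⟩ := Sym2.mem_iff_exists.mp hue
      have hcard : Multiset.card (R.erase s(u, y)) ≤ m := by
        rw [Multiset.card_erase_of_mem he, Nat.pred_eq_sub_one]; omega
      obtain ⟨l₂, rest, z, hh, hl, hsum, hrest⟩ := ih (R.erase s(u, y)) hcard y
      cases l₂ with
      | nil => simp at hh
      | cons c t =>
        simp at hh; subst hh
        refine ⟨u :: c :: t, rest, z, rfl, ?_, ?_, hrest⟩
        · rw [List.getLast?_cons_cons]; exact hl
        · rw [walkEdges_cons_cons, Multiset.cons_add, hsum, Multiset.cons_erase he]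
    · exact ⟨[u], R, u, rfl, rfl, by simp [walkEdges_single],
        fun e heR hue => h ⟨e, heR, hue⟩⟩

/-- maximal closed trail at a vertex, in an even multigraph -/
lemma trail_max (R : Multiset (Sym2 V)) (hev : ∀ x, Even (deg2 R x)) (u : V) :
    ∃ (l : List V) (rest : Multiset (Sym2 V)),
      l.head? = some u ∧ l.getLast? = some u ∧ walkEdges l + rest = R ∧
      ∀ e ∈ rest, u ∉ e := by
  obtain ⟨l, rest, z, hh, hl, hsum, hrest⟩ :=
    trail_exhaust (Multiset.card R) R le_rfl u
  have hz : z = u := by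
    have h1 : deg2 R z = deg2 (walkEdges l) z + deg2 rest z := by
      rw [← hsum, deg2_add]
    have h2 : deg2 rest z = 0 := deg2_eq_zero_of_no_mem hrest
    have h3 : Even (deg2 (walkEdges l) z) := by
      have := hev z; rw [h1, h2, add_zero] at this; exact this
    have h4 := deg2_walk_parity l u z z hh hl
    rcases eq_or_ne u z with h | h
    · exact h.symm
    · exfalso
      rw [if_neg h, if_pos rfl] at h4
      rw [Nat.even_iff] at h3 h4; omega
  subst hz
  exact ⟨l, rest, hh, hl, hsum, hrest⟩

lemma crossing {W : List V} {R M : Multiset (Sym2 V)} (hMR : walkEdges W + R = M) :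
    ∀ {v a : V}, (SimpleGraph.fromEdgeSet ((M.toFinset : Finset (Sym2 V)) : Set (Sym2 V))).Walk v a →
    v ∈ W → (∃ e ∈ R, a ∈ e) → ∃ w ∈ W, ∃ e ∈ R, w ∈ e := by
  intro v a p
  induction p with
  | nil => intro hv ha; exact ⟨_, hv, ha⟩
  | @cons v y b hadj q ih =>
    intro hv ha
    have hmem : s(v, y) ∈ M := by
      have := (SimpleGraph.fromEdgeSet_adj _).mp hadj
      simpa using this.1
    rw [← hMR, Multiset.mem_add] at hmem
    rcases hmem with hW | hR
    · exact ih (mem_of_mem_walkEdges hW (by simp)) ha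
    · exact ⟨v, hv, s(v, y), hR, by simp⟩

lemma euler_aux : ∀ (n : ℕ) (R : Multiset (Sym2 V)), Multiset.card R ≤ n →
    ∀ (W : List V) (v : V), W.head? = some v → W.getLast? = some v →
    (∀ x, Even (deg2 (walkEdges W + R) x)) →
    (∀ e ∈ R, ∀ x ∈ e, (SimpleGraph.fromEdgeSet
      (((walkEdges W + R).toFinset : Finset (Sym2 V)) : Set (Sym2 V))).Reachable v x) →
    ∃ W' : List V, W'.head? = some v ∧ W'.getLast? = some v ∧
      walkEdges W' = walkEdges W + R := by
  intro n
  induction n with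
  | zero =>
    intro R hR W v hh hl _ _
    have : R = 0 := by rw [← Multiset.card_eq_zero]; omega
    exact ⟨W, hh, hl, by simp [this]⟩
  | succ m ih =>
    intro R hR W v hh hl hev hreach
    rcases eq_or_ne R 0 with rfl | hR0
    · exact ⟨W, hh, hl, by simp⟩
    -- find a vertex of W incident to an R-edge
    obtain ⟨e₀, he₀⟩ := Multiset.exists_mem_of_ne_zero hR0
    obtain ⟨a, b, rfl⟩ : ∃ a b, e₀ = s(a, b) := by
      induction e₀ using Sym2.ind with | _ a b => exact ⟨a, b, rfl⟩
    have hva : (SimpleGraph.fromEdgeSet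
        (((walkEdges W + R).toFinset : Finset (Sym2 V)) : Set (Sym2 V))).Reachable v a :=
      hreach _ he₀ a (by simp)
    have hvW : v ∈ W := by
      have : W ≠ [] := by intro h; rw [h] at hh; simp at hh
      have := List.head?_eq_head this ▸ hh
      simp at this; rw [← this]; exact List.head_mem _
    obtain ⟨w, hwW, e₁, he₁R, hwe₁⟩ :=
      crossing rfl hva.some hvW ⟨s(a, b), he₀, by simp⟩
    -- evenness of R
    have hevR : ∀ x, Even (deg2 R x) := by
      intro x
      have h1 := hev x
      rw [deg2_add] at h1
      have h2 : Even (deg2 (walkEdges W) x) := by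
        have := deg2_walk_parity W v v x hh hl
        rcases eq_or_ne v x with h | h
        · rw [if_pos h] at this
          rw [Nat.even_iff] at this ⊢; omega
        · rw [if_neg h] at this; simpa using this
      exact (Nat.even_add.mp h1).mp h2
    -- maximal closed trail at w inside R
    obtain ⟨C, rest, hCh, hCl, hCsum, hCrest⟩ := trail_max R hevR w
    have hCne : walkEdges C ≠ 0 := by
      intro h0
      rw [h0, zero_add] at hCsum
      exact hCrest e₁ (hCsum ▸ he₁R) hwe₁
    have hcard : Multiset.card rest ≤ m := by
      have h1 : Multiset.card (walkEdges C) + Multiset.card rest = Multiset.card R := by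
        rw [← hCsum, Multiset.card_add]
      have h2 : 1 ≤ Multiset.card (walkEdges C) :=
        Nat.one_le_iff_ne_zero.mpr (by simpa using hCne)
      omega
    -- splice C into W at w
    obtain ⟨A, B, rfl⟩ := List.append_of_mem hwW
    set W₁ := A ++ C ++ B with hW₁
    have hsplice : walkEdges W₁ = walkEdges C + walkEdges (A ++ w :: B) :=
      walkEdges_splice A B C w hCh hCl
    have htot : walkEdges W₁ + rest = walkEdges (A ++ w :: B) + R := by
      rw [hsplice, ← hCsum]
      ac_rfl
    have hCne' : C ≠ [] := by intro h; rw [h] at hCh; simp at hCh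
    have hh₁ : W₁.head? = some v := by
      cases A with
      | nil =>
        have hwv : w = v := by simpa using hh
        subst hwv
        show (([] : List V) ++ C ++ B).head? = some w
        rw [List.nil_append]
        exact head?_append_of_head? hCh B
      | cons x A' =>
        have hx : x = v := by simpa using hh
        subst hx; rfl
    have hl₁ : W₁.getLast? = some v := by
      cases B with
      | nil =>
        have h1 : (A ++ [w]).getLast? = some w := by
          rw [List.getLast?_append_of_ne_nil A (by simp : [w] ≠ [])]; rfl
        have hwv : w = v := Option.some_inj.mp (h1.symm.trans hl)
        subst hwv
        show (A ++ C ++ []).getLast? = some w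
        rw [List.append_nil, List.getLast?_append_of_ne_nil A hCne']
        exact hCl
      | cons y B' =>
        have h2 : (y :: B') ≠ [] := by simp
        have he : A ++ w :: y :: B' = (A ++ [w]) ++ (y :: B') := by simp
        rw [he, List.getLast?_append_of_ne_nil _ h2] at hl
        show (A ++ C ++ (y :: B')).getLast? = some v
        rw [List.getLast?_append_of_ne_nil _ h2]
        exact hl
    have hev₁ : ∀ x, Even (deg2 (walkEdges W₁ + rest) x) := by
      intro x; rw [htot]; exact hev x
    have hreach₁ : ∀ e ∈ rest, ∀ x ∈ e, (SimpleGraph.fromEdgeSet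
        (((walkEdges W₁ + rest).toFinset : Finset (Sym2 V)) : Set (Sym2 V))).Reachable v x := by
      intro e he x hx
      rw [htot]
      refine hreach e ?_ x hx
      rw [← hCsum]
      exact Multiset.mem_add.mpr (Or.inr he)
    obtain ⟨W', h1, h2, h3⟩ := ih rest hcard W₁ v hh₁ hl₁ hev₁ hreach₁
    exact ⟨W', h1, h2, by rw [h3, htot]⟩

-- path edge facts
lemma loop_not_mem_walkEdges : ∀ {l : List V}, l.Nodup → ∀ x : V, s(x, x) ∉ walkEdges l := by
  intro l
  induction l with
  | nil => intro _ x; simp [walkEdges_nil]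
  | cons a t ih =>
    intro hnd x
    cases t with
    | nil => simp [walkEdges_single]
    | cons b t' =>
      rw [walkEdges_cons_cons, Multiset.mem_cons]
      rintro (h | h)
      · rw [Sym2.eq_iff] at h
        have hab : a ≠ b := by
          intro h'; subst h'; exact (List.nodup_cons.mp hnd).1 (by simp)
        rcases h with ⟨h1, h2⟩ | ⟨h1, h2⟩ <;> subst_eqs <;> simp_all
      · exact ih (List.nodup_cons.mp hnd).2 x h

lemma walkEdges_nodup : ∀ {l : List V}, l.Nodup → (walkEdges l).Nodup := by
  intro l
  induction l with
  | nil => intro _; simp [walkEdges_nil]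
  | cons a t ih =>
    intro hnd
    cases t with
    | nil => simp [walkEdges_single]
    | cons b t' =>
      rw [walkEdges_cons_cons, Multiset.nodup_cons]
      refine ⟨fun hmem => ?_, ih (List.nodup_cons.mp hnd).2⟩
      exact (List.nodup_cons.mp hnd).1 (mem_of_mem_walkEdges hmem (by simp))

lemma head_ne_getLast {l : List V} (hnd : l.Nodup) (hne : l ≠ []) (hlen : 2 ≤ l.length) :
    l.head hne ≠ l.getLast hne := by
  cases l with
  | nil => simp at hne
  | cons a t =>
    cases t with
    | nil => simp at hlen
    | cons b t' =>
      intro h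
      have h1 : (a :: b :: t').getLast (by simp) ∈ b :: t' := by
        rw [List.getLast_cons (by simp)]
        exact List.getLast_mem _
      rw [← h] at h1
      exact (List.nodup_cons.mp hnd).1 h1


/-- the multigraph obtained from the double of a tree by removing one
copy of each edge along each path of a family of pairwise vertex-disjoint subpaths
and adding the edge between the path endpoints is connected with all degrees even,
hence Eulerian. -/
theorem stmt18 {V : Type*} [Fintype V] [DecidableEq V]
    (T : Finset (Sym2 V)) (hT : IsSpanningTree T)
    (r : ℕ) (P : Fin r → List V) (hne : ∀ j, P j ≠ [])
    (hlen : ∀ j, 2 ≤ (P j).length)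
    (hPnd : ∀ j, (P j).Nodup)
    (hPsub : ∀ j, pathEdges (P j) ⊆ T)
    (hPdisj : ∀ i j, i ≠ j → Disjoint (P i).toFinset (P j).toFinset)
    (M : Multiset (Sym2 V))
    (hM : M = (T.val + T.val - ∑ j : Fin r, walkEdges (P j)) +
      ∑ j : Fin r, {s((P j).head (hne j), (P j).getLast (hne j))}) :
    (SimpleGraph.fromEdgeSet ((M.toFinset : Finset (Sym2 V)) : Set (Sym2 V))).Connected ∧
      (∀ v : V, Even (M.filter (fun e => v ∈ e)).card) ∧
      ∃ W : List V, IsClosedWalk W ∧ walkEdges W = M := by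
  classical
  set A : Multiset (Sym2 V) := ∑ j : Fin r, walkEdges (P j) with hA
  set S : Multiset (Sym2 V) :=
    ∑ j : Fin r, ({s((P j).head (hne j), (P j).getLast (hne j))} : Multiset (Sym2 V)) with hS
  have hd_ne : ∀ j, (P j).head (hne j) ≠ (P j).getLast (hne j) :=
    fun j => head_ne_getLast (hPnd j) (hne j) (hlen j)
  have hmemT : ∀ (j) {e : Sym2 V}, e ∈ walkEdges (P j) → e ∈ T := by
    intro j e he
    apply hPsub j
    rw [pathEdges, List.mem_toFinset]
    exact he
  have honely : ∀ (e : Sym2 V) i j, e ∈ walkEdges (P i) → e ∈ walkEdges (P j) → i = j := by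
    intro e i j hi hj
    by_contra hij
    obtain ⟨x, y, rfl⟩ : ∃ x y, e = s(x, y) := by
      induction e using Sym2.ind with | _ x y => exact ⟨x, y, rfl⟩
    have hx1 : x ∈ P i := mem_of_mem_walkEdges hi (by simp)
    have hx2 : x ∈ P j := mem_of_mem_walkEdges hj (by simp)
    exact Finset.disjoint_left.mp (hPdisj i j hij)
      (List.mem_toFinset.mpr hx1) (List.mem_toFinset.mpr hx2)
  have hcountA : ∀ e : Sym2 V, A.count e = ∑ j, (walkEdges (P j)).count e :=
    fun e => map_sum (Multiset.countAddMonoidHom e) _ _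
  have hAle : ∀ e : Sym2 V, A.count e ≤ T.val.count e := by
    intro e
    rw [hcountA]
    by_cases h : ∃ j, e ∈ walkEdges (P j)
    · obtain ⟨j₀, hj₀⟩ := h
      have h1 : ∑ j, (walkEdges (P j)).count e = (walkEdges (P j₀)).count e := by
        apply Finset.sum_eq_single_of_mem j₀ (Finset.mem_univ _)
        intro j _ hjne
        rw [Multiset.count_eq_zero]
        exact fun hc => hjne (honely e j j₀ hc hj₀)
      have h2 : (walkEdges (P j₀)).count e ≤ 1 :=
        Multiset.nodup_iff_count_le_one.mp (walkEdges_nodup (hPnd j₀)) e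
      have h3 : 1 ≤ T.val.count e := Multiset.one_le_count_iff_mem.mpr (hmemT j₀ hj₀)
      omega
    · push_neg at h
      rw [Finset.sum_eq_zero (fun j _ => Multiset.count_eq_zero.mpr (h j))]
      exact Nat.zero_le _
  have hAleM : A ≤ T.val + T.val := Multiset.le_iff_count.mpr (fun e => by
    have := hAle e; rw [Multiset.count_add]; omega)
  have hplus : M + A = (T.val + T.val) + S := by
    rw [hM, add_right_comm, tsub_add_cancel_of_le hAleM]
  have htree : (SimpleGraph.fromEdgeSet ((T : Finset (Sym2 V)) : Set (Sym2 V))).IsTree := hT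
  have hTM : ∀ e ∈ T, e ∈ M := by
    intro e he
    rw [← Multiset.one_le_count_iff_mem]
    have h1 : M.count e + A.count e = (T.val.count e + T.val.count e) + S.count e := by
      rw [← Multiset.count_add, hplus, Multiset.count_add, Multiset.count_add]
    have h2 := hAle e
    have h3 : 1 ≤ T.val.count e := Multiset.one_le_count_iff_mem.mpr he
    omega
  have hsub : ((T : Finset (Sym2 V)) : Set (Sym2 V)) ⊆
      ((M.toFinset : Finset (Sym2 V)) : Set (Sym2 V)) := by
    intro e he
    simp only [Finset.mem_coe, Multiset.mem_toFinset] at *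
    exact hTM e he
  have hconn : (SimpleGraph.fromEdgeSet
      ((M.toFinset : Finset (Sym2 V)) : Set (Sym2 V))).Connected :=
    SimpleGraph.Connected.mono (SimpleGraph.fromEdgeSet_mono hsub) htree.isConnected
  have hheadq : ∀ j, (P j).head? = some ((P j).head (hne j)) :=
    fun j => List.head?_eq_head _
  have hlastq : ∀ j, (P j).getLast? = some ((P j).getLast (hne j)) :=
    fun j => List.getLast?_eq_getLast _
  have hevenf : ∀ v : V, Even (M.countP (v ∈ ·)) := by
    intro v
    have h1 : M.countP (v ∈ ·) + A.countP (v ∈ ·) =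
        (T.val.countP (v ∈ ·) + T.val.countP (v ∈ ·)) + S.countP (v ∈ ·) := by
      rw [← Multiset.countP_add, hplus, Multiset.countP_add, Multiset.countP_add]
    have hcpA : A.countP (v ∈ ·) = ∑ j, (walkEdges (P j)).countP (v ∈ ·) :=
      map_sum (Multiset.countPAddMonoidHom _) _ _
    have hcpS : S.countP (v ∈ ·) = ∑ j,
        (({s((P j).head (hne j), (P j).getLast (hne j))} : Multiset (Sym2 V)).countP (v ∈ ·)) :=
      map_sum (Multiset.countPAddMonoidHom _) _ _
    have hper : ∀ j, Even ((walkEdges (P j)).countP (v ∈ ·) +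
        ({s((P j).head (hne j), (P j).getLast (hne j))} : Multiset (Sym2 V)).countP (v ∈ ·)) := by
      intro j
      have e1 : (walkEdges (P j)).countP (v ∈ ·) = deg2 (walkEdges (P j)) v := by
        rw [deg2, Multiset.count_eq_zero.mpr (loop_not_mem_walkEdges (hPnd j) v), add_zero]
      have hne2 : s(v, v) ∉ ({s((P j).head (hne j), (P j).getLast (hne j))} : Multiset (Sym2 V)) := by
        simp only [Multiset.mem_singleton]
        intro h
        rw [Sym2.eq_iff] at h
        rcases h with ⟨h1, h2⟩ | ⟨h1, h2⟩ <;> exact hd_ne j (by rw [← h1, ← h2])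
      have e2 : ({s((P j).head (hne j), (P j).getLast (hne j))} : Multiset (Sym2 V)).countP (v ∈ ·)
          = deg2 ({s((P j).head (hne j), (P j).getLast (hne j))} : Multiset (Sym2 V)) v := by
        rw [deg2, Multiset.count_eq_zero.mpr hne2, add_zero]
      rw [e1, e2, deg2_pair, ← add_assoc]
      exact deg2_walk_parity (P j) _ _ v (hheadq j) (hlastq j)
    have hev2 : Even (A.countP (v ∈ ·) + S.countP (v ∈ ·)) := by
      rw [hcpA, hcpS, ← Finset.sum_add_distrib]
      exact Finset.even_sum _ (fun j _ => hper j)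
    obtain ⟨k, hk⟩ := hev2
    rw [Nat.even_iff]
    omega
  refine ⟨hconn, ?_, ?_⟩
  · intro v
    rw [← Multiset.countP_eq_card_filter]
    exact hevenf v
  · obtain ⟨v₀⟩ : Nonempty V := htree.isConnected.nonempty
    have hloopM : ∀ x : V, M.count s(x, x) = T.val.count s(x, x) + T.val.count s(x, x) := by
      intro x
      have h1 : M.count s(x, x) + A.count s(x, x) =
          (T.val.count s(x, x) + T.val.count s(x, x)) + S.count s(x, x) := by
        rw [← Multiset.count_add, hplus, Multiset.count_add, Multiset.count_add]
      have h2 : A.count s(x, x) = 0 := by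
        rw [Multiset.count_eq_zero, hA]
        intro hc
        rw [Multiset.mem_sum] at hc
        obtain ⟨j, _, hj⟩ := hc
        exact loop_not_mem_walkEdges (hPnd j) x hj
      have h3 : S.count s(x, x) = 0 := by
        rw [Multiset.count_eq_zero, hS]
        intro hc
        rw [Multiset.mem_sum] at hc
        obtain ⟨j, _, hj⟩ := hc
        rw [Multiset.mem_singleton, Sym2.eq_iff] at hj
        rcases hj with ⟨h1', h2'⟩ | ⟨h1', h2'⟩ <;> exact hd_ne j (by rw [← h1', ← h2'])
      omega
    have hdeg2 : ∀ x, Even (deg2 M x) := by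
      intro x
      rw [deg2]
      exact Even.add (hevenf x) (by rw [hloopM]; exact Even.add_self _)
    obtain ⟨W, h1, h2, h3⟩ := euler_aux (Multiset.card M) M le_rfl [v₀] v₀ rfl rfl
      (fun x => by simpa [walkEdges_single] using hdeg2 x)
      (fun e he x hx => by simpa [walkEdges_single] using hconn.preconnected v₀ x)
    refine ⟨W, ⟨?_, h1.trans h2.symm⟩, ?_⟩
    · intro h; rw [h] at h1; simp at h1
    · rw [h3]; simp [walkEdges_single]
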